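/- For the Sobocinski (quasi) conjunction, property P1 fails: if A|H ⊆ B|K (Goodman–Nguyen inclusion) then (A|H) ∧_S (B|K) = (AH ∨ ¬HBK)|(H∨K), which differs from A|H whenever ¬HBK is possible (being true there while A|H is void). -/

import Mathlib

/-- The three truth values of de Finetti's trivalent logic. -/
inductive TV : Type
  | true : TV
  | false : TV
  | void : TV
deriving DecidableEq

open Classical in
/-- The conditional event `E|F`: true on `E∩F`, false on `Eᶜ∩F`, void on `Fᶜ`. -/
noncomputable def condEv {Ω : Type*} (E F : Set Ω) : Ω → TV := fun ω =>
  if ω ∈ F then (if ω ∈ E then TV.true else TV.false) else TV.void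

/-- The Sobociński (quasi) conjunction
`(A|H) ∧_S (B|K) = [(AH ∨ ¬H) ∧ (BK ∨ ¬K)] | (H ∨ K)`. -/
noncomputable def conjS {Ω : Type*} (A H B K : Set Ω) : Ω → TV :=
  condEv ((A ∩ H ∪ Hᶜ) ∩ (B ∩ K ∪ Kᶜ)) (H ∪ K)

/-!
On `H ∪ K` the Sobociński conjunction is `AB` on `HK`, `A` on `H¬K` and `B` on `¬HK`; the
inclusion `AH ⊆ BK` turns `AB` into `A` on `HK`, which gives the first claim. At a point of
`¬HBK` the conjunction is true, while `A|H` is void there.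
-/

section CondEv

variable {Ω : Type*} {E E' F : Set Ω} {ω : Ω}

theorem condEv_eq_condEv_of_inter_eq (h : E ∩ F = E' ∩ F) : condEv E F = condEv E' F := by
  funext ω
  by_cases hF : ω ∈ F
  · have hE : ω ∈ E ↔ ω ∈ E' := by
      simpa [hF] using Set.ext_iff.mp h ω
    by_cases hE' : ω ∈ E' <;> simp [condEv, hF, hE, hE']
  · simp [condEv, hF]

theorem condEv_of_notMem (hω : ω ∉ F) : condEv E F ω = TV.void := by
  simp [condEv, hω]

theorem condEv_of_mem_inter (hω : ω ∈ E ∩ F) : condEv E F ω = TV.true := by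
  simp [condEv, hω.1, hω.2]

end CondEv

section ConjS

variable {Ω : Type*} {A H B K : Set Ω}

theorem conjS_eq_condEv_of_inter_subset (hAB : A ∩ H ⊆ B ∩ K) :
    conjS A H B K = condEv (A ∩ H ∪ Hᶜ ∩ B ∩ K) (H ∪ K) := by
  refine condEv_eq_condEv_of_inter_eq (Set.ext fun ω => ?_)
  have hAB' := @hAB ω
  simp only [Set.mem_inter_iff, Set.mem_union, Set.mem_compl_iff] at hAB' ⊢
  tauto

theorem conjS_apply_of_mem (hω : ω ∈ Hᶜ ∩ B ∩ K) : conjS A H B K ω = TV.true := by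
  obtain ⟨⟨hH, hB⟩, hK⟩ := hω
  exact condEv_of_mem_inter ⟨⟨Or.inr hH, Or.inl ⟨hB, hK⟩⟩, Or.inr hK⟩

end ConjS

theorem sobocinski_fails_P1_general {Ω : Type*} (A H B K : Set Ω)
    (hAB : A ∩ H ⊆ B ∩ K)
    (hne : (Hᶜ ∩ B ∩ K).Nonempty) :
    conjS A H B K = condEv (A ∩ H ∪ Hᶜ ∩ B ∩ K) (H ∪ K) ∧
    conjS A H B K ≠ condEv A H := by
  refine ⟨conjS_eq_condEv_of_inter_subset hAB, fun heq => ?_⟩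
  obtain ⟨ω, hω⟩ := hne
  have hvoid : condEv A H ω = TV.void := condEv_of_notMem hω.1.1
  have htrue : conjS A H B K ω = TV.true := conjS_apply_of_mem hω
  rw [heq, hvoid] at htrue
  exact TV.noConfusion htrue

/-- Failure of P1 for the Sobociński conjunction: under the Goodman–Nguyen
inclusion `A|H ⊆ B|K` (`AH ⊆ BK` and `¬BK ⊆ ¬AH`) one has
`(A|H) ∧_S (B|K) = (AH ∨ ¬HBK)|(H∨K)`, which differs from `A|H` whenever
`¬HBK ≠ ∅` (being true there while `A|H` is void). -/
theorem sobocinski_fails_P1 {Ω : Type*} (A H B K : Set Ω)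
    (hAB : A ∩ H ⊆ B ∩ K) (hBA : Bᶜ ∩ K ⊆ Aᶜ ∩ H)
    (hne : (Hᶜ ∩ B ∩ K).Nonempty) :
    conjS A H B K = condEv (A ∩ H ∪ Hᶜ ∩ B ∩ K) (H ∪ K) ∧
    conjS A H B K ≠ condEv A H :=
  sobocinski_fails_P1_general A H B K hAB hne
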